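/- arXiv:math/0210026 — 4 statements merged into one kernel-verified Lean document; each statement's English description precedes it below -/
import Mathlib

section
/- Let R be a commutative associative ℝ-algebra with unit, let n ≥ 1, let A be an invertible n×n matrix with entries in R, and let g be a vector of n polynomials in one variable t with coefficients in R. Then the differential equation df/dt = A·f + g (where d/dt is applied entrywise and A·f denotes matrix–vector multiplication) has exactly one solution f among vectors of n polynomials in t with coefficients in R. -/
open Polynomial Matrix

/-- Lemma 4.3 (i): over a commutative associative ℝ-algebra `R`, with `A` an
invertible `n × n` matrix over `R` and `g` a vector of polynomials, the ODE
`df/dt = A·f + g` has exactly one polynomial solution `f`. -/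
theorem stmt_0 (R : Type*) [CommRing R] [Algebra ℝ R] (n : ℕ) (hn : 1 ≤ n)
    (A : Matrix (Fin n) (Fin n) R) (hA : IsUnit A)
    (g : Fin n → Polynomial R) :
    ∃! f : Fin n → Polynomial R,
      (fun i => Polynomial.derivative (f i)) = (A.map Polynomial.C).mulVec f + g := by
  classical
  obtain ⟨u, hu⟩ := hA
  set Ac : Matrix (Fin n) (Fin n) (Polynomial R) := A.map Polynomial.C with hAcdef
  set Bc : Matrix (Fin n) (Fin n) (Polynomial R) :=
    ((↑u⁻¹ : Matrix (Fin n) (Fin n) R)).map Polynomial.C with hBcdef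
  have hBA : Bc * Ac = 1 := by
    rw [hBcdef, hAcdef, ← Matrix.map_mul, ← hu]
    rw [u.inv_mul, Matrix.map_one _ (map_zero _) (map_one _)]
  have hAB : Ac * Bc = 1 := by
    rw [hBcdef, hAcdef, ← Matrix.map_mul, ← hu]
    rw [u.mul_inv, Matrix.map_one _ (map_zero _) (map_one _)]
  -- the derivative as an R-linear map on vectors of polynomials
  set D : (Fin n → Polynomial R) →ₗ[R] (Fin n → Polynomial R) :=
    LinearMap.pi (fun i => Polynomial.derivative ∘ₗ
      (LinearMap.proj i : (Fin n → Polynomial R) →ₗ[R] Polynomial R)) with hDdef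
  set E : (Fin n → Polynomial R) →ₗ[R] (Fin n → Polynomial R) :=
    ((Matrix.mulVecLin Bc).restrictScalars R) ∘ₗ D with hEdef
  have hE : ∀ x : Fin n → Polynomial R,
      E x = Bc.mulVec (fun i => Polynomial.derivative (x i)) := fun x => rfl
  set c : Fin n → Polynomial R := -(Bc.mulVec g) with hcdef
  -- the equation is equivalent to the fixed-point equation f = E f + c
  have key : ∀ f : Fin n → Polynomial R,
      ((fun i => Polynomial.derivative (f i)) = Ac.mulVec f + g) ↔ f = E f + c := by
    intro f
    constructor
    · intro h
      rw [hE, h, hcdef]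
      rw [Matrix.mulVec_add, Matrix.mulVec_mulVec, hBA, Matrix.one_mulVec]
      abel
    · intro h
      have h2 : Ac.mulVec f = Ac.mulVec (E f + c) := by rw [← h]
      rw [hE, hcdef, Matrix.mulVec_add, Matrix.mulVec_mulVec, hAB, Matrix.one_mulVec,
        Matrix.mulVec_neg, Matrix.mulVec_mulVec, hAB, Matrix.one_mulVec] at h2
      funext i
      have := congrFun h2 i
      simp only [Pi.add_apply, Pi.neg_apply] at this ⊢
      linear_combination -this
  -- degree decrease under E
  have hEdeg : ∀ (m : ℕ) (x : Fin n → Polynomial R),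
      (∀ i, (x i).natDegree ≤ m + 1) → ∀ i, ((E x) i).natDegree ≤ m := by
    intro m x hx i
    rw [hE]
    simp only [Matrix.mulVec, dotProduct]
    refine Polynomial.natDegree_sum_le_of_forall_le _ _ (fun j _ => ?_)
    refine le_trans (Polynomial.natDegree_mul_le) ?_
    have h1 : (Bc i j).natDegree = 0 := by
      rw [hBcdef, Matrix.map_apply]; exact Polynomial.natDegree_C _
    have h2 : (Polynomial.derivative (x j)).natDegree ≤ m := by
      refine le_trans (Polynomial.natDegree_derivative_le _) ?_
      have := hx j; omega
    omega
  -- local nilpotency of E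
  have nil : ∀ (m : ℕ) (x : Fin n → Polynomial R),
      (∀ i, (x i).natDegree ≤ m) → (E ^ (m + 1)) x = 0 := by
    intro m
    induction m with
    | zero =>
      intro x hx
      have hd : (fun i => Polynomial.derivative (x i)) = 0 := by
        funext i
        have : x i = Polynomial.C ((x i).coeff 0) :=
          Polynomial.eq_C_of_natDegree_le_zero (hx i)
        rw [this]; simp
      rw [pow_one, hE, hd, Matrix.mulVec_zero]
    | succ m ih =>
      intro x hx
      have : (E ^ (m + 2)) x = (E ^ (m + 1)) (E x) := by
        rw [pow_succ, Module.End.mul_apply]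
      rw [this]
      exact ih (E x) (hEdeg m x hx)
  -- the candidate solution
  set Ns : ℕ := Finset.univ.sup fun i => (c i).natDegree with hNsdef
  have hcN : ∀ i, (c i).natDegree ≤ Ns := fun i =>
    Finset.le_sup (f := fun i => (c i).natDegree) (Finset.mem_univ i)
  set N : ℕ := Ns + 1 with hNdef
  set f : Fin n → Polynomial R := ∑ k ∈ Finset.range N, (E ^ k) c with hfdef
  have hfix : f = E f + c := by
    rw [hfdef, map_sum]
    have h1 : ∑ k ∈ Finset.range N, E ((E ^ k) c)
        = ∑ k ∈ Finset.range N, (E ^ (k + 1)) c := by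
      refine Finset.sum_congr rfl (fun k _ => ?_)
      rw [pow_succ', Module.End.mul_apply]
    rw [h1]
    have h2 : ∑ k ∈ Finset.range (N + 1), (E ^ k) c
        = ∑ k ∈ Finset.range N, (E ^ (k + 1)) c + (E ^ 0) c :=
      Finset.sum_range_succ' _ N
    have h3 : ∑ k ∈ Finset.range (N + 1), (E ^ k) c
        = ∑ k ∈ Finset.range N, (E ^ k) c + (E ^ N) c :=
      Finset.sum_range_succ _ N
    have h4 : (E ^ N) c = 0 := nil Ns c hcN
    rw [h4, add_zero] at h3
    simp only [pow_zero, Module.End.one_apply] at h2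
    rw [← h2, h3]
  refine ⟨f, (key f).mpr hfix, ?_⟩
  intro y hy
  have hyfix : y = E y + c := (key y).mp hy
  set d : Fin n → Polynomial R := y - f with hddef
  have hdE : E d = d := by
    rw [hddef, map_sub]
    conv_rhs => rw [hyfix, hfix]
    abel
  have hdk : ∀ k : ℕ, (E ^ k) d = d := by
    intro k
    induction k with
    | zero => simp
    | succ k ih =>
      rw [pow_succ, Module.End.mul_apply, hdE, ih]
  have hd0 : d = 0 := by
    set M : ℕ := Finset.univ.sup fun i => (d i).natDegree with hMdef
    have hdM : ∀ i, (d i).natDegree ≤ M := fun i =>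
      Finset.le_sup (f := fun i => (d i).natDegree) (Finset.mem_univ i)
    rw [← hdk (M + 1)]
    exact nil M d hdM
  have : y = f := by
    have := hd0
    rw [hddef, sub_eq_zero] at this
    exact this
  exact this
end

section
/- Let l, n ≥ 1 and let B₁, …, B_l be n×n matrices with entries in the polynomial ring ℝ[q₁, …, q_l]. Suppose that for all i, j ∈ {1, …, l} one has (entrywise) q_i·∂B_j/∂q_i = q_j·∂B_i/∂q_j. Then for every i ∈ {1, …, l}, every monomial q₁^{d₁}⋯q_l^{d_l} with (d₁, …, d_l) ≠ 0 that occurs with nonzero coefficient in some entry of B_i satisfies d_i > 0; equivalently, B_i minus its constant term (the part with d = 0) is divisible by q_i. -/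
/-!
Under `q_i = e^{t_i}` the operator `q_i ∂/∂q_i` multiplies the coefficient of `q^d` by `d_i`.
Comparing the coefficients of `q^d` in `q_i ∂B_j/∂q_i = q_j ∂B_i/∂q_j` therefore gives
`d_i · [q^d]B_j = d_j · [q^d]B_i`; if `d_i = 0` but some `d_j ≠ 0`, then `[q^d]B_i = 0`.
-/

namespace MvPolynomial

variable {R σ : Type*} [CommSemiring R]

theorem coeff_X_mul_pderiv (i : σ) (p : MvPolynomial σ R) (d : σ →₀ ℕ) :
    coeff d (X i * pderiv i p) = d i * coeff d p := by
  classical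
  induction p using induction_on' with
  | monomial m r =>
    rw [X_mul_pderiv_monomial, coeff_smul, coeff_monomial]
    split_ifs with h
    · rw [h, nsmul_eq_mul]
    · rw [smul_zero, mul_zero]
  | add p q hp hq => rw [map_add, mul_add, coeff_add, coeff_add, hp, hq, mul_add]

theorem pos_of_coeff_ne_zero_of_X_mul_pderiv_symm [NoZeroDivisors R] [CharZero R]
    {p : σ → MvPolynomial σ R} {i : σ}
    (hp : ∀ j, X i * pderiv i (p j) = X j * pderiv j (p i))
    {d : σ →₀ ℕ} (hd : d ≠ 0) (hc : coeff d (p i) ≠ 0) : 0 < d i := by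
  rw [Nat.pos_iff_ne_zero]
  intro hdi
  obtain ⟨j, hj⟩ : ∃ j, d j ≠ 0 := by simpa [Finsupp.ext_iff] using hd
  have hcoeff := congrArg (coeff d) (hp j)
  rw [coeff_X_mul_pderiv, coeff_X_mul_pderiv, hdi, Nat.cast_zero, zero_mul] at hcoeff
  exact mul_ne_zero (Nat.cast_ne_zero.mpr hj) hc hcoeff.symm

end MvPolynomial

theorem stmt_2_general (l n : ℕ)
    (B : Fin l → Matrix (Fin n) (Fin n) (MvPolynomial (Fin l) ℝ))
    (hB : ∀ i j (a b : Fin n),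
      MvPolynomial.X i * MvPolynomial.pderiv i (B j a b)
        = MvPolynomial.X j * MvPolynomial.pderiv j (B i a b)) :
    ∀ (i : Fin l) (a b : Fin n) (d : Fin l →₀ ℕ), d ≠ 0 →
      MvPolynomial.coeff d (B i a b) ≠ 0 → 0 < d i :=
  fun i a b _ hd hc =>
    MvPolynomial.pos_of_coeff_ne_zero_of_X_mul_pderiv_symm (p := fun j => B j a b)
      (fun j => hB i j a b) hd hc

/-- Lemma 4.1: if matrices `B₁, …, B_l` over `ℝ[q₁,…,q_l]` satisfy (entrywise)
`q_i·∂B_j/∂q_i = q_j·∂B_i/∂q_j`, then every nonconstant monomial occurring in an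
entry of `B_i` is a multiple of `q_i`. -/
theorem stmt_2 (l n : ℕ) (hl : 1 ≤ l) (hn : 1 ≤ n)
    (B : Fin l → Matrix (Fin n) (Fin n) (MvPolynomial (Fin l) ℝ))
    (hB : ∀ i j (a b : Fin n),
      MvPolynomial.X i * MvPolynomial.pderiv i (B j a b)
        = MvPolynomial.X j * MvPolynomial.pderiv j (B i a b)) :
    ∀ (i : Fin l) (a b : Fin n) (d : Fin l →₀ ℕ), d ≠ 0 →
      MvPolynomial.coeff d (B i a b) ≠ 0 → 0 < d i :=
  stmt_2_general l n B hB
end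

section
/- Let R be a commutative associative ℝ-algebra with unit and let l, n ≥ 1. An element of R^n[t₁,…,t_l][[e^{t₁},…,e^{t_l}]] is encoded as a function g from multi-indices d : (Fin l →₀ ℕ) to vectors of n polynomials in MvPolynomial (Fin l) R, and the operator ∂/∂t_i sends g to the function d ↦ pderiv i (g d) + (d i) • (g d). Let A₁, …, A_l be finitely supported functions from multi-indices (Fin l →₀ ℕ) to n×n matrices over R (representing matrices with entries polynomial in e^{t₁},…,e^{t_l}), and suppose: (a) for all i, j and every multi-index d, the convolution products agree: Σ_{d₁+d₂=d} A_i(d₁)·A_j(d₂) = Σ_{d₁+d₂=d} A_j(d₁)·A_i(d₂); (b) for all i, j and every multi-index d, (d i) • A_j(d) = (d j) • A_i(d); (c) for every i, the matrix A_i(0) is strictly lower triangular, and every multi-index d ≠ 0 with A_i(d) ≠ 0 satisfies d i > 0. Then for every vector v ∈ R^n there exists exactly one g as above satisfying, for all i and all multi-indices d, pderiv i (g d) + (d i) • (g d) = Σ_{d₁+d₂=d} A_i(d₁)·(g d₂) (matrix–vector multiplication, with matrix entries viewed as constant polynomials), and such that the constant coefficient (value under MvPolynomial.constantCoeff, applied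 entrywise) of g(0) equals v. -/
/-!
Write `∇_i = ∂/∂t_i - A_i` for the operators on `R^n[t][[e^t]]`; hypotheses (a) and (b) say
exactly that the `∇_i` pairwise commute. On the coefficient of `e^{t·d}`, and modulo the
lower coefficients, `∇_i` acts by `u ↦ ∂_i u + d_i u - A_i(0) u`. When `d_i ≠ 0` this map is
invertible, because `A_i(0)` is nilpotent, `∂_i` is locally nilpotent on polynomials and the two
commute. Hence the coefficients of a solution are determined degree by degree. In degree `0`
the solution is `exp(∑ t_j A_j(0)) v`, and it is unique because `exp(-∑ t_j A_j(0)) g_0` has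
vanishing derivatives for any solution `g`. In a degree `d ≠ 0` one solves the equation for a single
`i` with `d_i ≠ 0`; the equations for the other `j` then hold automatically, since
`∇_i (∇_j g) = ∇_j (∇_i g)` vanishes in degree `d` while `∇_j g` vanishes in all lower degrees.
-/

open MvPolynomial Finset
open scoped Matrix

namespace Module.End

variable {R M : Type*} [AddCommGroup M]

theorem exists_pow_apply_eq_zero_add_of_commute [Semiring R] [Module R M]
    {f g : Module.End R M} (hfg : Commute f g) (hf : IsNilpotent f)
    (hg : ∀ x, ∃ k, (g ^ k) x = 0) (x : M) : ∃ k, ((f + g) ^ k) x = 0 := by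
  obtain ⟨a, ha⟩ := hf
  obtain ⟨b, hb⟩ := hg x
  refine ⟨a + b, ?_⟩
  rw [hfg.add_pow, LinearMap.sum_apply]
  refine Finset.sum_eq_zero fun m _ => ?_
  rcases le_or_gt a m with ham | ham
  · simp [pow_eq_zero_of_le ham ha]
  · rw [show a + b - m = (a + b - m - b) + b by omega]
    simp [pow_add, hb]

theorem isUnit_one_sub [Semiring R] [Module R M] {g : Module.End R M}
    (hg : ∀ x, ∃ k, (g ^ k) x = 0) : IsUnit (1 - g) := by
  refine (Module.End.isUnit_iff _).2
    ⟨(injective_iff_map_eq_zero _).2 fun u hu => ?_, fun w => ?_⟩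
  · have hfix : u = g u := sub_eq_zero.mp hu
    have hiter : ∀ k, (g ^ k) u = u := fun k => by
      induction k with
      | zero => rfl
      | succ k ih => rw [pow_succ, Module.End.mul_apply, ← hfix, ih]
    obtain ⟨k, hk⟩ := hg u
    rw [← hiter k, hk]
  · obtain ⟨k, hk⟩ := hg w
    refine ⟨(∑ i ∈ range k, g ^ i) w, ?_⟩
    rw [← Module.End.mul_apply, mul_neg_geom_sum, LinearMap.sub_apply, hk, Module.End.one_apply,
      sub_zero]

theorem isUnit_smul_one_sub [CommSemiring R] [Module R M] {f : Module.End R M}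
    (hf : ∀ x, ∃ k, (f ^ k) x = 0) {c : R} (hc : IsUnit c) : IsUnit (c • 1 - f) := by
  obtain ⟨c, rfl⟩ := hc
  have hfactor : (c : R) • (1 : Module.End R M) - f
      = algebraMap R (Module.End R M) c * (1 - (↑c⁻¹ : R) • f) := by
    rw [Algebra.algebraMap_eq_smul_one, smul_one_mul, smul_sub, smul_smul, Units.mul_inv, one_smul]
  rw [hfactor]
  refine (c.isUnit.map _).mul (isUnit_one_sub fun x => ?_)
  obtain ⟨k, hk⟩ := hf x
  exact ⟨k, by rw [smul_pow, LinearMap.smul_apply, hk, smul_zero]⟩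

end Module.End

namespace Matrix

variable {S : Type*} [Semiring S] {n : ℕ}

theorem pow_apply_eq_zero_of_lt {M : Matrix (Fin n) (Fin n) S} (hM : ∀ a b, a ≤ b → M a b = 0)
    (k : ℕ) {a b : Fin n} (hab : (a : ℕ) < b + k) : (M ^ k) a b = 0 := by
  induction k generalizing a with
  | zero => exact one_apply_ne (by omega)
  | succ k ih =>
    rw [pow_succ', mul_apply]
    refine sum_eq_zero fun c _ => ?_
    rcases le_or_gt a c with hac | hca
    · rw [hM a c hac, zero_mul]
    · rw [ih (by omega), mul_zero]

theorem isNilpotent_of_forall_le_apply_eq_zero {M : Matrix (Fin n) (Fin n) S}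
    (hM : ∀ a b, a ≤ b → M a b = 0) : IsNilpotent M :=
  ⟨n, ext fun _ _ => pow_apply_eq_zero_of_lt hM n (by omega)⟩

end Matrix

theorem Finset.sum_antidiagonal_sum_antidiagonal_snd {A M : Type*} [AddMonoid A]
    [HasAntidiagonal A] [AddCommMonoid M] (f : A → A → A → M) (d : A) :
    ∑ p ∈ antidiagonal d, ∑ q ∈ antidiagonal p.2, f p.1 q.1 q.2
      = ∑ p ∈ antidiagonal d, ∑ q ∈ antidiagonal p.1, f q.1 q.2 p.2 := by
  simp only [sum_sigma']
  apply sum_nbij' (fun ⟨⟨i, _⟩, ⟨j, k⟩⟩ ↦ ⟨(i + j, k), (i, j)⟩)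
    (fun ⟨⟨_, k⟩, ⟨i, j⟩⟩ ↦ ⟨(i, j + k), (j, k)⟩) <;> aesop (add simp [add_assoc])

namespace MvPolynomial

section CommSemiring

variable {R σ : Type*} [CommSemiring R]

theorem exists_coeff_iterate_pderiv (i : σ) (p : MvPolynomial σ R) (k : ℕ) (m : σ →₀ ℕ) :
    ∃ c : R, coeff m ((pderiv i)^[k] p) = coeff (m + Finsupp.single i k) p * c := by
  induction k generalizing m with
  | zero => exact ⟨1, by simp⟩
  | succ k ih =>
    obtain ⟨c, hc⟩ := ih (m + Finsupp.single i 1)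
    refine ⟨c * (m i + 1), ?_⟩
    rw [Function.iterate_succ_apply', coeff_pderiv, hc, add_assoc, ← Finsupp.single_add,
      add_comm 1 k, mul_assoc]

theorem iterate_pderiv_eq_zero {i : σ} {p : MvPolynomial σ R} {k : ℕ} (hk : degreeOf i p < k) :
    (pderiv i)^[k] p = 0 := by
  ext m
  obtain ⟨c, hc⟩ := exists_coeff_iterate_pderiv i p k m
  rw [hc, coeff_zero, notMem_support_iff.mp fun hm => ?_, zero_mul]
  have := monomial_le_degreeOf i hm
  simp only [Finsupp.add_apply, Finsupp.single_eq_same] at this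
  omega

theorem pderiv_pderiv_comm (i j : σ) (p : MvPolynomial σ R) :
    pderiv i (pderiv j p) = pderiv j (pderiv i p) := by
  classical
  ext m
  simp only [coeff_pderiv]
  rw [add_right_comm]
  rcases eq_or_ne i j with rfl | hij
  · rfl
  · simp [hij, hij.symm]
    ring

end CommSemiring

section CommRing

variable {R σ : Type*} [CommRing R]

theorem eq_zero_of_pderiv_eq_zero [IsAddTorsionFree R] {p : MvPolynomial σ R}
    (hD : ∀ i, pderiv i p = 0) (hc : constantCoeff p = 0) : p = 0 := by
  rw [← coe_inj, coe_zero]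
  refine MvPowerSeries.pderiv.ext (fun i => ?_) ?_
  · simp [MvPowerSeries.pderiv_coe, hD]
  · rw [← MvPowerSeries.coeff_zero_eq_constantCoeff_apply, coeff_coe, ← constantCoeff_eq, hc,
      map_zero]

end CommRing

end MvPolynomial

namespace IsNilpotent

variable {A : Type*} [Ring A] [Module ℚ A]

theorem apply_exp_eq_mul_exp (D : A →+ A) (hD : ∀ x y, D (x * y) = D x * y + x * D y) {a : A}
    (ha : IsNilpotent a) (hcomm : Commute (D a) a) : D (exp a) = D a * exp a := by
  obtain ⟨k, hk⟩ := ha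
  have hD1 : D 1 = 0 := by simpa using hD 1 1
  have hpow : ∀ m : ℕ, D (a ^ (m + 1)) = (m + 1) • (D a * a ^ m) := fun m => by
    induction m with
    | zero => simp
    | succ m ih =>
      rw [_root_.pow_succ', hD, ih, mul_smul_comm, ← mul_assoc, ← hcomm.eq, mul_assoc,
        ← _root_.pow_succ', succ_nsmul' _ (m + 1)]
  have hk' : a ^ (k + 1) = 0 := by rw [_root_.pow_succ, hk, zero_mul]
  conv_lhs => rw [exp_eq_sum hk']
  rw [exp_eq_sum hk, map_sum, sum_range_succ', mul_sum]
  simp only [map_rat_smul, pow_zero, hD1, smul_zero, add_zero, hpow]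
  refine sum_congr rfl fun i _ => ?_
  rw [show D a * ((i.factorial : ℚ)⁻¹ • a ^ i) = _ from
    map_rat_smul (AddMonoidHom.mulLeft (D a)) _ _, ← Nat.cast_smul_eq_nsmul ℚ, smul_smul]
  congr 1
  push_cast [Nat.factorial_succ]
  field_simp

theorem commute_exp_of_commute {a b : A} (h : Commute b a) : Commute b (exp a) :=
  Commute.sum_right _ _ _ fun i _ => by
    have hl := map_rat_smul (AddMonoidHom.mulLeft b) (i.factorial : ℚ)⁻¹ (a ^ i)
    have hr := map_rat_smul (AddMonoidHom.mulRight b) (i.factorial : ℚ)⁻¹ (a ^ i)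
    simp only [AddMonoidHom.coe_mulLeft, AddMonoidHom.coe_mulRight] at hl hr
    rw [Commute, SemiconjBy, hl, hr, (h.pow_right i).eq]

end IsNilpotent

namespace DubrovinConnection

variable {R σ ι : Type*} [CommRing R]

noncomputable def vecDeriv (i : σ) : Module.End R (ι → MvPolynomial σ R) :=
  (pderiv i).toLinearMap.compLeft ι

theorem vecDeriv_apply (i : σ) (w : ι → MvPolynomial σ R) (k : ι) :
    vecDeriv i w k = pderiv i (w k) := rfl

theorem vecDeriv_pow_apply (i : σ) (k : ℕ) (w : ι → MvPolynomial σ R) (b : ι) :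
    (vecDeriv i ^ k) w b = (pderiv i)^[k] (w b) := by
  induction k generalizing w with
  | zero => rfl
  | succ k ih =>
    rw [pow_succ, Module.End.mul_apply, ih, vecDeriv_apply, Function.iterate_succ_apply]

theorem exists_vecDeriv_pow_apply_eq_zero [Fintype ι] (i : σ) (w : ι → MvPolynomial σ R) :
    ∃ k, (vecDeriv i ^ k) w = 0 :=
  ⟨univ.sup (fun b => degreeOf i (w b)) + 1, funext fun b => by
    rw [vecDeriv_pow_apply]
    exact iterate_pderiv_eq_zero (Nat.lt_succ_of_le (le_sup (f := fun b => degreeOf i (w b))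
      (mem_univ b)))⟩

theorem vecDeriv_mulVec [Fintype ι] (j : σ) (E : Matrix ι ι (MvPolynomial σ R))
    (w : ι → MvPolynomial σ R) :
    vecDeriv j (E *ᵥ w) = E.map (pderiv j) *ᵥ w + E *ᵥ vecDeriv j w := by
  funext k
  simp [vecDeriv_apply, Matrix.mulVec, dotProduct, sum_add_distrib, mul_comm, add_comm]

theorem map_pderiv_mul [Fintype ι] (j : σ) (M N : Matrix ι ι (MvPolynomial σ R)) :
    (M * N).map (pderiv j) = M.map (pderiv j) * N + M * N.map (pderiv j) :=
  Matrix.ext fun a b => by simp [Matrix.mul_apply, sum_add_distrib, mul_comm, add_comm]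

theorem map_pderiv_exp [Fintype ι] [DecidableEq ι] [Algebra ℚ R] (j : σ)
    {P : Matrix ι ι (MvPolynomial σ R)} (hP : IsNilpotent P) (h : Commute (P.map (pderiv j)) P) :
    (IsNilpotent.exp P).map (pderiv j) = P.map (pderiv j) * IsNilpotent.exp P :=
  IsNilpotent.apply_exp_eq_mul_exp (A := Matrix ι ι (MvPolynomial σ R))
    (AddMonoidHom.mapMatrix (pderiv j).toLinearMap.toAddMonoidHom) (map_pderiv_mul j) hP h

noncomputable def potential [Fintype σ] (N : σ → Matrix ι ι R) : Matrix ι ι (MvPolynomial σ R) :=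
  ∑ j, (X j : MvPolynomial σ R) • (N j).map C

theorem map_pderiv_potential [Fintype σ] (N : σ → Matrix ι ι R) (j : σ) :
    (potential N).map (pderiv j) = (N j).map C := by
  classical
  refine Matrix.ext fun a b => ?_
  simp [potential, Matrix.sum_apply, pderiv_X, Pi.single_apply]

theorem commute_potential [Fintype σ] [Fintype ι] {N : σ → Matrix ι ι R}
    (hcomm : ∀ i j, Commute (N i) (N j)) (j : σ) : Commute ((N j).map C) (potential N) :=
  Commute.sum_right _ _ _ fun k _ => Commute.smul_right (by
    rw [Commute, SemiconjBy, ← Matrix.map_mul, ← Matrix.map_mul, (hcomm j k).eq]) _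

/-- A series in `R^ι[t][[e^t]]`: `g d` is the coefficient of `e^{t·d}`. -/
abbrev Series (R σ ι : Type*) [CommRing R] := (σ →₀ ℕ) → ι → MvPolynomial σ R

noncomputable def seriesDeriv (i : σ) : Module.End R (Series R σ ι) where
  toFun g d := vecDeriv i (g d) + d i • g d
  map_add' g h := funext fun d => by
    simp only [Pi.add_apply, map_add, smul_add]
    abel
  map_smul' r g := funext fun d => by
    simp only [Pi.smul_apply, map_smul, RingHom.id_apply, smul_add, smul_comm r (d i)]

theorem seriesDeriv_apply (i : σ) (g : Series R σ ι) (d : σ →₀ ℕ) :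
    seriesDeriv i g d = vecDeriv i (g d) + d i • g d := rfl

theorem commute_seriesDeriv (i j : σ) :
    Commute (seriesDeriv (R := R) (ι := ι) i) (seriesDeriv j) := by
  refine LinearMap.ext fun g => funext fun d => funext fun k => ?_
  simp only [Module.End.mul_apply, seriesDeriv_apply, Pi.add_apply, Pi.smul_apply, map_add,
    map_nsmul, vecDeriv_apply, pderiv_pderiv_comm i j, smul_add, smul_comm (d i) (d j)]
  abel

variable [Fintype ι] [DecidableEq ι]

noncomputable def mulVecC : Matrix ι ι R →+* Module.End R (ι → MvPolynomial σ R) where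
  toFun M := (M.map C).mulVecLin.restrictScalars R
  map_one' := LinearMap.ext fun w => by
    simp [Matrix.map_one _ C.map_zero C.map_one]
  map_mul' M N := LinearMap.ext fun w => by
    simp [Matrix.map_mul, Matrix.mulVec_mulVec]
  map_zero' := LinearMap.ext fun w => by simp
  map_add' M N := LinearMap.ext fun w => by simp [Matrix.map_add _ (map_add C)]

theorem mulVecC_apply (M : Matrix ι ι R) (w : ι → MvPolynomial σ R) :
    mulVecC M w = M.map C *ᵥ w := rfl

theorem commute_mulVecC_vecDeriv (M : Matrix ι ι R) (i : σ) :
    Commute (mulVecC M) (vecDeriv (ι := ι) i) := by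
  refine LinearMap.ext fun w => funext fun k => ?_
  simp [mulVecC_apply, vecDeriv_apply, Matrix.mulVec, dotProduct]

noncomputable def leadOp (i : σ) (c : ℕ) (M : Matrix ι ι R) :
    Module.End R (ι → MvPolynomial σ R) :=
  vecDeriv i + c • 1 - mulVecC M

theorem leadOp_apply (i : σ) (c : ℕ) (M : Matrix ι ι R) (u : ι → MvPolynomial σ R) :
    leadOp i c M u = vecDeriv i u + c • u - mulVecC M u := rfl

theorem bijective_leadOp [Algebra ℚ R] {M : Matrix ι ι R} (hM : IsNilpotent M) (i : σ) {c : ℕ}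
    (hc : c ≠ 0) : Function.Bijective (leadOp i c M) := by
  have hsplit : leadOp i c M = (c : R) • 1 - (mulVecC M + -vecDeriv i) := by
    rw [leadOp, Nat.cast_smul_eq_nsmul]
    abel
  have hcR : IsUnit (c : R) := by
    simpa using (Nat.cast_ne_zero.mpr hc : (c : ℚ) ≠ 0).isUnit.map (algebraMap ℚ R)
  rw [hsplit, ← Module.End.isUnit_iff]
  refine Module.End.isUnit_smul_one_sub (fun w => ?_) hcR
  refine Module.End.exists_pow_apply_eq_zero_add_of_commute
    (commute_mulVecC_vecDeriv M i).neg_right (hM.map mulVecC) (fun w => ?_) w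
  obtain ⟨k, hk⟩ := exists_vecDeriv_pow_apply_eq_zero i w
  exact ⟨k, by rw [neg_pow, Module.End.mul_apply, hk, map_zero]⟩

section Connection

variable [DecidableEq σ]

noncomputable def convolve (F : (σ →₀ ℕ) → Matrix ι ι R) : Module.End R (Series R σ ι) where
  toFun g d := ∑ p ∈ antidiagonal d, mulVecC (F p.1) (g p.2)
  map_add' g h := funext fun d => by simp only [Pi.add_apply, map_add, sum_add_distrib]
  map_smul' r g := funext fun d => by
    simp only [Pi.smul_apply, map_smul, smul_sum, RingHom.id_apply]

theorem convolve_apply (F : (σ →₀ ℕ) → Matrix ι ι R) (g : Series R σ ι) (d : σ →₀ ℕ) :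
    convolve F g d = ∑ p ∈ antidiagonal d, mulVecC (F p.1) (g p.2) := rfl

theorem seriesDeriv_mul_convolve (i : σ) (F : (σ →₀ ℕ) → Matrix ι ι R) :
    seriesDeriv i * convolve F
      = convolve (ι := ι) F * seriesDeriv i + convolve fun d => d i • F d := by
  refine LinearMap.ext fun g => funext fun d => ?_
  rw [LinearMap.add_apply, Module.End.mul_apply, Module.End.mul_apply, Pi.add_apply,
    seriesDeriv_apply, convolve_apply, convolve_apply, convolve_apply, map_sum, smul_sum,
    ← sum_add_distrib, ← sum_add_distrib]
  refine sum_congr rfl fun p hp => ?_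
  rw [← Module.End.mul_apply (vecDeriv i), ← (commute_mulVecC_vecDeriv _ i).eq,
    Module.End.mul_apply, seriesDeriv_apply, map_add, map_nsmul, map_nsmul, LinearMap.smul_apply,
    ← (mem_antidiagonal.mp hp), Finsupp.add_apply, add_nsmul]
  abel

theorem convolve_mul_convolve (F G : (σ →₀ ℕ) → Matrix ι ι R) :
    convolve (ι := ι) F * convolve G
      = convolve fun d => ∑ p ∈ antidiagonal d, F p.1 * G p.2 := by
  refine LinearMap.ext fun g => funext fun d => ?_
  simp only [Module.End.mul_apply, convolve_apply, map_sum, LinearMap.sum_apply, map_mul]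
  exact sum_antidiagonal_sum_antidiagonal_snd (fun a b c => mulVecC (F a) (mulVecC (G b) (g c))) d

noncomputable def nabla (A : σ → (σ →₀ ℕ) → Matrix ι ι R) (i : σ) :
    Module.End R (Series R σ ι) :=
  seriesDeriv i - convolve (A i)

theorem commute_nabla {A : σ → (σ →₀ ℕ) → Matrix ι ι R}
    (ha : ∀ i j d,
      ∑ p ∈ antidiagonal d, A i p.1 * A j p.2 = ∑ p ∈ antidiagonal d, A j p.1 * A i p.2)
    (hb : ∀ i j (d : σ →₀ ℕ), d i • A j d = d j • A i d) (i j : σ) :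
    Commute (nabla A i) (nabla A j) := by
  have hconv : convolve (A i) * convolve (A j) = convolve (ι := ι) (A j) * convolve (A i) := by
    simp only [convolve_mul_convolve, ha i j]
  have hweight : (convolve fun d => d i • A j d) = convolve (ι := ι) fun d => d j • A i d := by
    simp only [hb i j]
  simp only [Commute, SemiconjBy, nabla, sub_mul, mul_sub, seriesDeriv_mul_convolve, hconv,
    hweight, (commute_seriesDeriv i j).eq]
  abel

theorem nabla_apply_of_forall_lt_eq_zero (A : σ → (σ →₀ ℕ) → Matrix ι ι R) (i : σ)
    {g : Series R σ ι} {d : σ →₀ ℕ} (hg : ∀ d' < d, g d' = 0) :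
    nabla A i g d = leadOp i (d i) (A i 0) (g d) := by
  have hconv : convolve (A i) g d = mulVecC (A i 0) (g d) := by
    rw [convolve_apply, sum_eq_single (0, d)]
    · intro p hp hne
      have hlt : p.2 < d := (HasAntidiagonal.antidiagonal.snd_le hp).lt_of_ne fun h => hne <| by
        rw [HasAntidiagonal.mem_antidiagonal, h, add_eq_right] at hp
        exact Prod.ext hp h
      rw [hg _ hlt, map_zero]
    · exact fun h => absurd (HasAntidiagonal.mem_antidiagonal.mpr (zero_add d)) h
  rw [nabla, LinearMap.sub_apply, Pi.sub_apply, seriesDeriv_apply, hconv, leadOp_apply]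

theorem nabla_apply_congr (A : σ → (σ →₀ ℕ) → Matrix ι ι R) (i : σ) {g g' : Series R σ ι}
    {d : σ →₀ ℕ} (h : ∀ d' ≤ d, g d' = g' d') : nabla A i g d = nabla A i g' d := by
  have hlt : ∀ d' < d, (g - g') d' = 0 := fun d' hd' => sub_eq_zero.mpr (h d' hd'.le)
  rw [← sub_eq_zero, ← Pi.sub_apply, ← map_sub, nabla_apply_of_forall_lt_eq_zero A i hlt,
    Pi.sub_apply, h d le_rfl, sub_self, map_zero]

theorem nabla_apply_eq_zero_of_pivot [Algebra ℚ R] {A : σ → (σ →₀ ℕ) → Matrix ι ι R}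
    (hflat : ∀ i j, Commute (nabla A i) (nabla A j)) (hA0 : ∀ i, IsNilpotent (A i 0))
    {g : Series R σ ι} {d : σ →₀ ℕ} (hg : ∀ d' < d, ∀ j, nabla A j g d' = 0) {i : σ}
    (hi : d i ≠ 0) (hgi : nabla A i g d = 0) (j : σ) : nabla A j g d = 0 := by
  have hflat_ij : nabla A i (nabla A j g) d = 0 := by
    rw [← Module.End.mul_apply, (hflat i j).eq, Module.End.mul_apply,
      nabla_apply_congr A j (g' := 0) fun d' hd' => ?_, map_zero, Pi.zero_apply]
    rcases hd'.lt_or_eq with hlt | rfl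
    · exact hg d' hlt i
    · exact hgi
  rw [nabla_apply_of_forall_lt_eq_zero A i fun d' hd' => hg d' hd' j] at hflat_ij
  exact (map_eq_zero_iff _ (bijective_leadOp (hA0 i) i hi).1).mp hflat_ij

end Connection

section InitialValue

variable [Fintype σ] {N : σ → Matrix ι ι R}

theorem isNilpotent_potential (hN : ∀ j, IsNilpotent (N j))
    (hcomm : ∀ i j, Commute (N i) (N j)) : IsNilpotent (potential N) :=
  Commute.isNilpotent_sum (fun j _ => ((hN j).map C.mapMatrix).smul _)
    fun i j _ _ => (((hcomm i j).map C.mapMatrix).smul_left _).smul_right _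

variable [Algebra ℚ R]

noncomputable def initialValue (N : σ → Matrix ι ι R) (v : ι → R) : ι → MvPolynomial σ R :=
  IsNilpotent.exp (potential N) *ᵥ fun k => C (v k)

theorem vecDeriv_initialValue (hN : ∀ j, IsNilpotent (N j)) (hcomm : ∀ i j, Commute (N i) (N j))
    (v : ι → R) (j : σ) : vecDeriv j (initialValue N v) = mulVecC (N j) (initialValue N v) := by
  have hC : vecDeriv j (fun k => C (v k)) = 0 := funext fun k => pderiv_C
  have hcomm' : Commute ((potential N).map (pderiv j)) (potential N) := by
    rw [map_pderiv_potential]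
    exact commute_potential hcomm j
  rw [initialValue, vecDeriv_mulVec, hC, Matrix.mulVec_zero, add_zero,
    map_pderiv_exp j (isNilpotent_potential hN hcomm) hcomm', map_pderiv_potential,
    ← Matrix.mulVec_mulVec, mulVecC_apply]

theorem constantCoeff_initialValue (hN : ∀ j, IsNilpotent (N j))
    (hcomm : ∀ i j, Commute (N i) (N j)) (v : ι → R) (k : ι) :
    constantCoeff (initialValue N v k) = v k := by
  have hP0 : constantCoeff.mapMatrix (potential N) = 0 :=
    Matrix.ext fun a b => by simp [potential, Matrix.sum_apply]
  rw [initialValue, RingHom.map_mulVec, ← RingHom.mapMatrix_apply,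
    IsNilpotent.map_exp (isNilpotent_potential hN hcomm), hP0, IsNilpotent.exp_zero]
  simp

theorem eq_zero_of_vecDeriv_eq_mulVecC (hN : ∀ j, IsNilpotent (N j))
    (hcomm : ∀ i j, Commute (N i) (N j)) {u : ι → MvPolynomial σ R}
    (hu : ∀ j, vecDeriv j u = mulVecC (N j) u) (hu0 : ∀ k, constantCoeff (u k) = 0) : u = 0 := by
  have hP := isNilpotent_potential hN hcomm
  have : IsAddTorsionFree R := .of_module_rat R
  set w := IsNilpotent.exp (-potential N) *ᵥ u with hw_def
  have hw : ∀ j, vecDeriv j w = 0 := fun j => by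
    have hDneg : (-potential N).map (pderiv j) = -(N j).map C := by
      rw [← map_pderiv_potential]
      exact Matrix.ext fun a b => by simp
    have hcomm' : Commute ((-potential N).map (pderiv j)) (-potential N) := by
      rw [hDneg]
      exact (commute_potential hcomm j).neg_left.neg_right
    have hexp : Commute ((N j).map C) (IsNilpotent.exp (-potential N)) :=
      IsNilpotent.commute_exp_of_commute (commute_potential hcomm j).neg_right
    rw [vecDeriv_mulVec, map_pderiv_exp j hP.neg hcomm', hDneg, hu j, mulVecC_apply,
      Matrix.mulVec_mulVec, ← hexp.eq, neg_mul, Matrix.neg_mulVec, neg_add_cancel]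
  have hw0 : w = 0 := funext fun k => by
    refine eq_zero_of_pderiv_eq_zero (fun j => congrFun (hw j) k) ?_
    rw [hw_def, RingHom.map_mulVec, show constantCoeff ∘ u = 0 from funext hu0, Matrix.mulVec_zero,
      Pi.zero_apply]
  calc u = (IsNilpotent.exp (potential N) * IsNilpotent.exp (-potential N)) *ᵥ u := by
        rw [IsNilpotent.exp_mul_exp_neg_self hP, Matrix.one_mulVec]
    _ = 0 := by rw [← Matrix.mulVec_mulVec, ← hw_def, hw0, Matrix.mulVec_zero]

end InitialValue

section Solution

variable [DecidableEq σ] {A : σ → (σ →₀ ℕ) → Matrix ι ι R}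

def SolvesAt (A : σ → (σ →₀ ℕ) → Matrix ι ι R) (v : ι → R) (g : Series R σ ι) (d : σ →₀ ℕ) :
    Prop :=
  (∀ j, nabla A j g d = 0) ∧ (d = 0 → ∀ k, constantCoeff (g d k) = v k)

theorem solvesAt_congr {v : ι → R} {g g' : Series R σ ι} {d : σ →₀ ℕ}
    (h : ∀ d' ≤ d, g d' = g' d') : SolvesAt A v g d ↔ SolvesAt A v g' d := by
  simp only [SolvesAt, nabla_apply_congr A _ h, h d le_rfl]

theorem forall_solvesAt_iff {v : ι → R} {g : Series R σ ι} :
    (∀ d, SolvesAt A v g d) ↔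
      (∀ i d, (fun k => pderiv i (g d k) + d i • g d k)
        = ∑ p ∈ antidiagonal d, (A i p.1).map C *ᵥ g p.2)
      ∧ (fun k => constantCoeff (g 0 k)) = v := by
  simp only [SolvesAt, nabla, LinearMap.sub_apply, Pi.sub_apply, sub_eq_zero]
  exact ⟨fun h => ⟨fun i d => (h d).1 i, funext fun k => (h 0).2 rfl k⟩,
    fun h d => ⟨fun i => h.1 i d, fun hd k => hd ▸ congrFun h.2 k⟩⟩

/-- Built by well-founded recursion on the multi-index: the coefficient of degree `d` is chosen so
that the system holds in degree `d`, given the coefficients of lower degree. -/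
noncomputable def flatSection (A : σ → (σ →₀ ℕ) → Matrix ι ι R) (v : ι → R) : Series R σ ι :=
  wellFounded_lt.fix fun d rec => Classical.epsilon fun u =>
    SolvesAt A v (Function.update (fun d' => if h : d' < d then rec d' h else 0) d u) d

theorem flatSection_apply (A : σ → (σ →₀ ℕ) → Matrix ι ι R) (v : ι → R) (d : σ →₀ ℕ) :
    flatSection A v d = Classical.epsilon fun u => SolvesAt A v
      (Function.update (fun d' => if d' < d then flatSection A v d' else 0) d u) d := by
  rw [flatSection, WellFounded.fix_eq]
  simp only [dite_eq_ite]

variable [Fintype σ] [Algebra ℚ R]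

theorem exists_solvesAt_update (hflat : ∀ i j, Commute (nabla A i) (nabla A j))
    (hA0 : ∀ i, IsNilpotent (A i 0)) (hcomm : ∀ i j, Commute (A i 0) (A j 0)) (v : ι → R)
    {g : Series R σ ι} {d : σ →₀ ℕ} (hg : ∀ d' < d, SolvesAt A v g d') :
    ∃ u, SolvesAt A v (Function.update g d u) d := by
  have hlow : ∀ u, ∀ d' < d, ∀ j, nabla A j (Function.update g d u) d' = 0 := fun u d' hd' j => by
    rw [nabla_apply_congr A j (g' := g) fun d'' hd'' =>
      Function.update_of_ne (hd''.trans_lt hd').ne _ _]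
    exact (hg d' hd').1 j
  rcases eq_or_ne d 0 with rfl | hd
  · refine ⟨initialValue (fun i => A i 0) v, fun j => ?_, fun _ k => ?_⟩
    · rw [nabla_apply_of_forall_lt_eq_zero A j fun d' hd' => absurd hd' not_lt_zero,
        Function.update_self, leadOp_apply, Finsupp.coe_zero, Pi.zero_apply, zero_smul, add_zero,
        vecDeriv_initialValue hA0 hcomm, sub_self]
    · rw [Function.update_self, constantCoeff_initialValue hA0 hcomm]
  · obtain ⟨i, hi⟩ := Finsupp.ne_iff.mp hd
    obtain ⟨u, hu⟩ := (bijective_leadOp (hA0 i) i hi).2 (-nabla A i (Function.update g d 0) d)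
    have hsplit : Function.update g d u = Function.update g d 0 + Pi.single d u := by
      funext d'
      rcases eq_or_ne d' d with rfl | hne
      · simp
      · simp [hne]
    have hgi : nabla A i (Function.update g d u) d = 0 := by
      rw [hsplit, map_add, Pi.add_apply, nabla_apply_of_forall_lt_eq_zero A i (g := Pi.single d u)
        fun d' hd' => Pi.single_eq_of_ne hd'.ne _, Pi.single_eq_same, hu, add_neg_cancel]
    exact ⟨u, nabla_apply_eq_zero_of_pivot hflat hA0 (hlow u) hi hgi, fun h => absurd h hd⟩

theorem solvesAt_flatSection (hflat : ∀ i j, Commute (nabla A i) (nabla A j))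
    (hA0 : ∀ i, IsNilpotent (A i 0)) (hcomm : ∀ i j, Commute (A i 0) (A j 0)) (v : ι → R)
    (d : σ →₀ ℕ) : SolvesAt A v (flatSection A v) d := by
  induction d using WellFoundedLT.induction with
  | _ d ih =>
  set below : Series R σ ι := fun d' => if d' < d then flatSection A v d' else 0
  have hbelow : ∀ d' < d, SolvesAt A v below d' := fun d' hd' =>
    (solvesAt_congr fun d'' hd'' => if_pos (hd''.trans_lt hd')).mpr (ih d' hd')
  have hspec := Classical.epsilon_spec (exists_solvesAt_update hflat hA0 hcomm v hbelow)
  rw [← flatSection_apply] at hspec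
  refine (solvesAt_congr fun d' hd' => ?_).mp hspec
  rcases hd'.lt_or_eq with hlt | rfl
  · rw [Function.update_of_ne hlt.ne]
    exact if_pos hlt
  · rw [Function.update_self]

theorem eq_of_forall_solvesAt (hA0 : ∀ i, IsNilpotent (A i 0))
    (hcomm : ∀ i j, Commute (A i 0) (A j 0)) {v : ι → R} {g g' : Series R σ ι}
    (hg : ∀ d, SolvesAt A v g d) (hg' : ∀ d, SolvesAt A v g' d) : g = g' := by
  funext d
  induction d using WellFoundedLT.induction with
  | _ d ih =>
  have hlow : ∀ d' < d, (g - g') d' = 0 := fun d' hd' => sub_eq_zero.mpr (ih d' hd')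
  have hlead : ∀ j, leadOp j (d j) (A j 0) ((g - g') d) = 0 := fun j => by
    rw [← nabla_apply_of_forall_lt_eq_zero A j hlow, map_sub, Pi.sub_apply, (hg d).1 j,
      (hg' d).1 j, sub_zero]
  rw [← sub_eq_zero, ← Pi.sub_apply]
  rcases eq_or_ne d 0 with rfl | hd
  · refine eq_zero_of_vecDeriv_eq_mulVecC hA0 hcomm (fun j => ?_) fun k => ?_
    · simpa [leadOp_apply, sub_eq_zero] using hlead j
    · rw [Pi.sub_apply, Pi.sub_apply, map_sub, (hg 0).2 rfl k, (hg' 0).2 rfl k, sub_self]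
  · obtain ⟨i, hi⟩ := Finsupp.ne_iff.mp hd
    exact (map_eq_zero_iff _ (bijective_leadOp (hA0 i) i hi).1).mp (hlead i)

theorem existsUnique_forall_solvesAt (hflat : ∀ i j, Commute (nabla A i) (nabla A j))
    (hA0 : ∀ i, IsNilpotent (A i 0)) (hcomm : ∀ i j, Commute (A i 0) (A j 0)) (v : ι → R) :
    ∃! g : Series R σ ι, ∀ d, SolvesAt A v g d :=
  ⟨flatSection A v, solvesAt_flatSection hflat hA0 hcomm v,
    fun _ hg => eq_of_forall_solvesAt hA0 hcomm hg (solvesAt_flatSection hflat hA0 hcomm v)⟩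

end Solution

end DubrovinConnection

theorem stmt_4_general (R : Type*) [CommRing R] [Algebra ℝ R] (l n : ℕ)
    (A : Fin l → ((Fin l →₀ ℕ) →₀ Matrix (Fin n) (Fin n) R))
    (ha : ∀ i j (d : Fin l →₀ ℕ),
      ∑ p ∈ Finset.HasAntidiagonal.antidiagonal d, A i p.1 * A j p.2
        = ∑ p ∈ Finset.HasAntidiagonal.antidiagonal d, A j p.1 * A i p.2)
    (hb : ∀ i j (d : Fin l →₀ ℕ), (d i) • A j d = (d j) • A i d)
    (hc1 : ∀ i (a b : Fin n), a ≤ b → A i 0 a b = 0)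
    (v : Fin n → R) :
    ∃! g : (Fin l →₀ ℕ) → Fin n → MvPolynomial (Fin l) R,
      (∀ i (d : Fin l →₀ ℕ),
        (fun k => MvPolynomial.pderiv i (g d k) + (d i) • g d k)
          = ∑ p ∈ Finset.HasAntidiagonal.antidiagonal d, ((A i p.1).map MvPolynomial.C).mulVec (g p.2))
      ∧ (fun k => MvPolynomial.constantCoeff (g 0 k)) = v := by
  let : Algebra ℚ R := ((algebraMap ℝ R).comp (algebraMap ℚ ℝ)).toAlgebra
  have hA0 : ∀ i, IsNilpotent (A i 0) := fun i =>
    Matrix.isNilpotent_of_forall_le_apply_eq_zero (hc1 i)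
  have hcomm : ∀ i j, Commute (A i 0) (A j 0) := fun i j => by
    simpa [Commute, SemiconjBy] using ha i j 0
  exact (existsUnique_congr fun g => DubrovinConnection.forall_solvesAt_iff).mp
    (DubrovinConnection.existsUnique_forall_solvesAt (A := fun i => A i)
      (DubrovinConnection.commute_nabla ha hb) hA0 hcomm v)

/-- Proposition 4.2: existence and uniqueness of solutions of the PDE system
`∂g/∂t_i = A_i g` in `R^n[t₁,…,t_l][[e^{t₁},…,e^{t_l}]]` with prescribed
constant coefficient of `g 0`, under the commutation, symmetry and
triangularity assumptions (a), (b), (c). -/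
theorem stmt_4 (R : Type*) [CommRing R] [Algebra ℝ R] (l n : ℕ) (hl : 1 ≤ l) (hn : 1 ≤ n)
    (A : Fin l → ((Fin l →₀ ℕ) →₀ Matrix (Fin n) (Fin n) R))
    (ha : ∀ i j (d : Fin l →₀ ℕ),
      ∑ p ∈ Finset.HasAntidiagonal.antidiagonal d, A i p.1 * A j p.2
        = ∑ p ∈ Finset.HasAntidiagonal.antidiagonal d, A j p.1 * A i p.2)
    (hb : ∀ i j (d : Fin l →₀ ℕ), (d i) • A j d = (d j) • A i d)
    (hc1 : ∀ i (a b : Fin n), a ≤ b → A i 0 a b = 0)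
    (hc2 : ∀ i (d : Fin l →₀ ℕ), d ≠ 0 → A i d ≠ 0 → 0 < d i)
    (v : Fin n → R) :
    ∃! g : (Fin l →₀ ℕ) → Fin n → MvPolynomial (Fin l) R,
      (∀ i (d : Fin l →₀ ℕ),
        (fun k => MvPolynomial.pderiv i (g d k) + (d i) • g d k)
          = ∑ p ∈ Finset.HasAntidiagonal.antidiagonal d, ((A i p.1).map MvPolynomial.C).mulVec (g p.2))
      ∧ (fun k => MvPolynomial.constantCoeff (g 0 k)) = v :=
  stmt_4_general R l n A ha hb hc1 v
end

section
/- Let l ≥ 1, let c be a symmetric positive definite real l×l matrix, and let h be a nonzero real number. Encode an element g of ℝ[t₁,…,t_l][[e^{t₁},…,e^{t_l}]] as a function from multi-indices d : (Fin l →₀ ℕ) to polynomials g_d ∈ MvPolynomial (Fin l) ℝ. Suppose g₀ = 0 and that g is annihilated by the operator H = h²·Σ_{i,j} c_{ij} ∂²/∂t_i∂t_j − Σ_j c_{jj} e^{t_j}, i.e., for every multi-index d: h²·Σ_{i,j} c_{ij}·(pderiv i + (d i))((pderiv j + (d j)) g_d) − Σ_j c_{jj}·g_{d−e_j} = 0,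 where e_j is the j-th standard multi-index and g_{d−e_j} is interpreted as 0 when d j = 0. Then g = 0. -/
/-!
Comparing coefficients of `e^{t·d}`, `H g = 0` reads `h² L_d g_d = Σ_j c_jj g_{d-e_j}` with
`L_d = Σ c_ij (∂_i + d_i)(∂_j + d_j)`. By induction on `d` the right-hand side vanishes, so it
suffices that `L_d` is injective for `d ≠ 0`. Derivatives lower the degree, so at a monomial of
maximal total degree of `p` the coefficient of `L_d p` is `dᵀ c d` times that of `p`, and
`dᵀ c d > 0` by positive definiteness.
-/

open Finsupp Matrix

noncomputable section

theorem Finsupp.tsub_single_one_lt {σ : Type*} {d : σ →₀ ℕ} {j : σ} (hj : d j ≠ 0) :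
    d - single j 1 < d := by
  refine tsub_le_self.lt_of_ne fun h => hj ?_
  have := DFunLike.congr_fun h j
  simp only [coe_tsub, Pi.sub_apply, single_eq_same] at this
  omega

namespace MvPolynomial

variable {σ R : Type*} [CommSemiring R]

theorem totalDegree_pderiv_le (i : σ) (p : MvPolynomial σ R) :
    (pderiv i p).totalDegree ≤ p.totalDegree := by
  refine Finset.sup_le fun m hm => ?_
  have hmi : m + single i 1 ∈ p.support := by
    rw [mem_support_iff, coeff_pderiv] at hm
    exact mem_support_iff.2 (left_ne_zero_of_mul hm)
  calc m.degree ≤ (m + single i 1).degree := by simp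
    _ ≤ p.totalDegree := le_totalDegree hmi

theorem coeff_pderiv_eq_zero_of_totalDegree_le {i : σ} {p : MvPolynomial σ R} {m : σ →₀ ℕ}
    (h : p.totalDegree ≤ m.degree) : coeff m (pderiv i p) = 0 := by
  have hlt : p.totalDegree < (m + single i 1).degree := by
    rw [map_add, degree_single]
    omega
  rw [coeff_pderiv, coeff_eq_zero_of_totalDegree_lt hlt, zero_mul]

def shiftedPderiv (d : σ →₀ ℕ) (i : σ) (p : MvPolynomial σ R) : MvPolynomial σ R :=
  pderiv i p + d i • p

theorem totalDegree_shiftedPderiv_le (d : σ →₀ ℕ) (i : σ) (p : MvPolynomial σ R) :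
    (shiftedPderiv d i p).totalDegree ≤ p.totalDegree :=
  (totalDegree_add _ _).trans (max_le (totalDegree_pderiv_le i p) (totalDegree_smul_le _ _))

theorem coeff_shiftedPderiv_of_totalDegree_le {d : σ →₀ ℕ} {i : σ} {p : MvPolynomial σ R}
    {m : σ →₀ ℕ} (h : p.totalDegree ≤ m.degree) :
    coeff m (shiftedPderiv d i p) = d i * coeff m p := by
  rw [shiftedPderiv, coeff_add, coeff_pderiv_eq_zero_of_totalDegree_le h, zero_add, coeff_smul,
    nsmul_eq_mul]

variable [Fintype σ]

/-- `Σ cᵢⱼ ∂ᵢ∂ⱼ (p e^{t·d}) = (twistedLaplacian c d p) e^{t·d}`. -/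
def twistedLaplacian (c : Matrix σ σ R) (d : σ →₀ ℕ) (p : MvPolynomial σ R) : MvPolynomial σ R :=
  ∑ i, ∑ j, c i j • shiftedPderiv d i (shiftedPderiv d j p)

theorem coeff_twistedLaplacian_of_totalDegree_le (c : Matrix σ σ R) (d : σ →₀ ℕ)
    {p : MvPolynomial σ R} {m : σ →₀ ℕ} (h : p.totalDegree ≤ m.degree) :
    coeff m (twistedLaplacian c d p) =
      ((Nat.cast ∘ d : σ → R) ⬝ᵥ c *ᵥ (Nat.cast ∘ d)) * coeff m p := by
  have h' j : (shiftedPderiv d j p).totalDegree ≤ m.degree :=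
    (totalDegree_shiftedPderiv_le d j p).trans h
  simp only [twistedLaplacian, coeff_sum, coeff_smul, coeff_shiftedPderiv_of_totalDegree_le (h' _),
    coeff_shiftedPderiv_of_totalDegree_le h, dotProduct, mulVec, Finset.sum_mul,
    Finset.mul_sum, Function.comp_apply, smul_eq_mul]
  exact Finset.sum_congr rfl fun i _ => Finset.sum_congr rfl fun j _ => by ring

theorem eq_zero_of_twistedLaplacian_eq_zero {c : Matrix σ σ ℝ} (hc : c.PosDef) {d : σ →₀ ℕ}
    (hd : d ≠ 0) {p : MvPolynomial σ ℝ} (hp : twistedLaplacian c d p = 0) : p = 0 := by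
  by_contra hp0
  obtain ⟨m, hm, hdeg⟩ := Finset.exists_mem_eq_sup p.support (support_nonempty.2 hp0)
    fun s => s.degree
  have hcoeff := coeff_twistedLaplacian_of_totalDegree_le c d (m := m) hdeg.le
  rw [hp, coeff_zero, eq_comm, mul_eq_zero] at hcoeff
  have hd' : (Nat.cast ∘ d : σ → ℝ) ≠ 0 := fun h0 =>
    hd (Finsupp.ext fun i => by simpa using congrFun h0 i)
  have hpos := hc.dotProduct_mulVec_pos hd'
  rw [star_trivial] at hpos
  exact hcoeff.elim hpos.ne' (mem_support_iff.1 hm)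

end MvPolynomial

end

theorem stmt_6_general (l : ℕ) (c : Matrix (Fin l) (Fin l) ℝ)
    (hpos : c.PosDef) (h : ℝ) (hh : h ≠ 0)
    (g : (Fin l →₀ ℕ) → MvPolynomial (Fin l) ℝ)
    (hg0 : g 0 = 0)
    (hH : ∀ d : Fin l →₀ ℕ,
      h ^ 2 • (∑ i, ∑ j, c i j •
        (MvPolynomial.pderiv i (MvPolynomial.pderiv j (g d) + (d j) • g d)
          + (d i) • (MvPolynomial.pderiv j (g d) + (d j) • g d)))
      - ∑ j, c j j • (if d j = 0 then 0 else g (d - Finsupp.single j 1)) = 0) :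
    g = 0 := by
  funext d
  induction d using WellFoundedLT.induction with
  | _ d ih =>
  rcases eq_or_ne d 0 with rfl | hd
  · exact hg0
  have hlower : ∑ j, c j j • (if d j = 0 then 0 else g (d - Finsupp.single j 1)) = 0 :=
    Finset.sum_eq_zero fun j _ => by
      split_ifs with hj
      · exact smul_zero _
      · rw [ih _ (Finsupp.tsub_single_one_lt hj), Pi.zero_apply, smul_zero]
  have hlap : h ^ 2 • MvPolynomial.twistedLaplacian c d (g d) = 0 := by
    have hHd := hH d
    rwa [hlower, sub_zero] at hHd
  exact MvPolynomial.eq_zero_of_twistedLaplacian_eq_zero hpos hd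
    ((smul_eq_zero.1 hlap).resolve_left (pow_ne_zero 2 hh))

/-- Kim's lemma (Lemma 4.6): if `g ∈ ℝ[t₁,…,t_l][[e^{t₁},…,e^{t_l}]]` has
`g₀ = 0` and is annihilated by
`H = h²·Σ_{i,j} c_{ij} ∂²/∂t_i∂t_j − Σ_j c_{jj} e^{t_j}` with `c` symmetric
positive definite and `h ≠ 0`, then `g = 0`. -/
theorem stmt_6 (l : ℕ) (hl : 1 ≤ l) (c : Matrix (Fin l) (Fin l) ℝ)
    (hsymm : c.IsSymm) (hpos : c.PosDef) (h : ℝ) (hh : h ≠ 0)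
    (g : (Fin l →₀ ℕ) → MvPolynomial (Fin l) ℝ)
    (hg0 : g 0 = 0)
    (hH : ∀ d : Fin l →₀ ℕ,
      h ^ 2 • (∑ i, ∑ j, c i j •
        (MvPolynomial.pderiv i (MvPolynomial.pderiv j (g d) + (d j) • g d)
          + (d i) • (MvPolynomial.pderiv j (g d) + (d j) • g d)))
      - ∑ j, c j j • (if d j = 0 then 0 else g (d - Finsupp.single j 1)) = 0) :
    g = 0 :=
  stmt_6_general l c hpos h hh g hg0 hH
end
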